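/- Fix t > 0, ε > 0, β, ρ ∈ ℝ, let δ = -|β| - |ρ|/t + √((|β| + |ρ|/t)² + 2ε/t), let γ₀ ≥ 0, let ν be a Borel measure on ℝ concentrated on (0,∞) with ∫ min(x,1) ν(dx) < ∞ and ∫_{x>1} e^{rx} ν(dx) < ∞ for all r < ε, and let π be a Borel probability measure on ℝ concentrated on (-∞,0). Then the function Θ(u) = ∫_{(-∞,0)} ∫₀ᵗ θ_L(u·f_u(A,s)) ds π(dA) is well defined and complex differentiable (analytic) on the open strip S = {u ∈ ℂ : |Re u| < δ}. -/

import Mathlib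

/-!
For `A < 0` and `0 ≤ s ≤ t` the coefficient `(e^{A(t-s)} - 1)/A` lies in `[0, t]`, so
`Re (u·f_u(A,s)) ≤ t (|Re u| |β| + (Re u)²/2) + |ρ| |Re u|`, and this bound is `< ε` exactly when
`|Re u| < δ`. On the half-plane `Re z < ε` the exponential moments of `ν` make `θ_L` holomorphic,
with `|θ_L'| ≤ |γ₀| + ∫ x e^{rx} ν(dx)` on `Re z ≤ r`; by the mean value theorem this also bounds
`|θ_L(z)| / |z|`. So near each point of the strip the integrand and its `u`-derivative are bounded
uniformly, and `Θ` can be differentiated under the integral over the finite measure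
`π|_{(-∞,0)} ⊗ ds|_{(0,t]}`.
-/

open MeasureTheory

/-- `u·f_u(A,s) = ((e^{A(t-s)} - 1)/A)(uβ + u²/2) + ρu` for complex `u`. -/
noncomputable def ufc (t β ρ : ℝ) (u : ℂ) (A s : ℝ) : ℂ :=
  (((Real.exp (A * (t - s)) - 1) / A : ℝ) : ℂ) * (u * (β : ℂ) + u ^ 2 / 2) + (ρ : ℂ) * u

/-- `θ_L(z) = γ₀ z + ∫_{(0,∞)} (e^{zx} - 1) ν(dx)`. -/
noncomputable def thetaL (γ₀ : ℝ) (ν : Measure ℝ) (z : ℂ) : ℂ :=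
  (γ₀ : ℂ) * z + ∫ x in Set.Ioi (0 : ℝ), (Complex.exp (z * (x : ℂ)) - 1) ∂ν

/-- `Θ(u) = ∫_{(-∞,0)} ∫₀ᵗ θ_L(u·f_u(A,s)) ds π(dA)`. -/
noncomputable def Theta (t β ρ γ₀ : ℝ) (ν π : Measure ℝ) (u : ℂ) : ℂ :=
  ∫ A in Set.Iio (0 : ℝ), (∫ s in (0 : ℝ)..t, thetaL γ₀ ν (ufc t β ρ u A s)) ∂π

open Set Metric Filter Topology

theorem integrableOn_Ioi_mul_exp {ν : Measure ℝ} {ε r : ℝ}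
    (hmin : Integrable (fun x : ℝ => min x 1) ν)
    (hexp : ∀ r : ℝ, r < ε → IntegrableOn (fun x : ℝ => Real.exp (r * x)) {x | 1 < x} ν)
    (hr : r < ε) : IntegrableOn (fun x : ℝ => x * Real.exp (r * x)) (Ioi 0) ν := by
  set c := (ε - r) / 2
  have hc : 0 < c := by simp only [c]; linarith
  rw [← Ioc_union_Ioi_eq_Ioi zero_le_one]
  refine IntegrableOn.union ?_ ?_
  · refine (hmin.const_mul (Real.exp |r|)).integrableOn.mono' (by fun_prop) ?_
    filter_upwards [ae_restrict_mem measurableSet_Ioc] with x ⟨hx0, hx1⟩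
    rw [min_eq_left hx1, Real.norm_of_nonneg (by positivity), mul_comm]
    gcongr
    nlinarith [le_abs_self r, abs_nonneg r]
  · refine ((hexp (r + c) (by simp only [c]; linarith)).const_mul c⁻¹).mono' (by fun_prop) ?_
    filter_upwards [ae_restrict_mem measurableSet_Ioi] with x hx
    have hx_le : x ≤ c⁻¹ * Real.exp (c * x) := by
      rw [le_inv_mul_iff₀ hc]
      linarith [Real.add_one_le_exp (c * x)]
    rw [Real.norm_of_nonneg (by positivity)]
    calc x * Real.exp (r * x) ≤ c⁻¹ * Real.exp (c * x) * Real.exp (r * x) := by gcongr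
      _ = c⁻¹ * Real.exp ((r + c) * x) := by rw [add_mul, Real.exp_add]; ring

section ComplexExp

variable {z : ℂ} {x r : ℝ}

theorem norm_cexp_mul_ofReal_le (hx : 0 ≤ x) (hz : z.re ≤ r) :
    ‖Complex.exp (z * x)‖ ≤ Real.exp (r * x) := by
  rw [Complex.norm_exp, Complex.re_mul_ofReal]
  gcongr

theorem norm_cexp_mul_ofReal_sub_one_le (hx : 0 ≤ x) (hr : 0 ≤ r) (hz : z.re ≤ r) :
    ‖Complex.exp (z * x) - 1‖ ≤ ‖z‖ * (x * Real.exp (r * x)) := by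
  have hderiv (w : ℂ) :
      HasDerivAt (fun w : ℂ => Complex.exp (w * x)) (x * Complex.exp (w * x)) w := by
    simpa [mul_comm] using ((hasDerivAt_id w).mul_const (x : ℂ)).cexp
  have := (convex_halfSpace_re_le r).norm_image_sub_le_of_norm_hasDerivWithin_le
    (C := x * Real.exp (r * x)) (fun w _ => (hderiv w).hasDerivWithinAt) (fun w hw => ?_)
    (show (0 : ℂ) ∈ {w : ℂ | w.re ≤ r} by simpa using hr) hz
  · simpa [mul_comm ‖z‖] using this
  · rw [norm_mul, Complex.norm_real, Real.norm_of_nonneg hx]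
    exact mul_le_mul_of_nonneg_left (norm_cexp_mul_ofReal_le hx hw) hx

end ComplexExp

section ThetaL

variable {γ₀ ε r : ℝ} {ν : Measure ℝ} {z : ℂ}

theorem hasDerivAt_integral_cexp_mul_sub_one (hε : 0 < ε)
    (hν : ∀ r < ε, IntegrableOn (fun x : ℝ => x * Real.exp (r * x)) (Ioi 0) ν) (hz : z.re < ε) :
    HasDerivAt (fun w : ℂ => ∫ x in Ioi (0 : ℝ), (Complex.exp (w * x) - 1) ∂ν)
      (∫ x in Ioi (0 : ℝ), x * Complex.exp (z * x) ∂ν) z := by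
  set r := max ((z.re + ε) / 2) 0
  have hr : r < ε := max_lt (by linarith) hε
  have hs : {w : ℂ | w.re < (z.re + ε) / 2} ∈ 𝓝 z :=
    (isOpen_lt Complex.continuous_re continuous_const).mem_nhds
      (show z.re < (z.re + ε) / 2 by linarith)
  refine (hasDerivAt_integral_of_dominated_loc_of_deriv_le
    (F := fun w x => Complex.exp (w * x) - 1) (F' := fun w x => x * Complex.exp (w * x))
    (bound := fun x => x * Real.exp (r * x)) hs
    (.of_forall fun _ => (Continuous.aestronglyMeasurable (by fun_prop))) ?_
    (Continuous.aestronglyMeasurable (by fun_prop)) ?_ (hν r hr) ?_).2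
  · refine ((hν r hr).const_mul ‖z‖).mono' (by fun_prop) ?_
    filter_upwards [ae_restrict_mem measurableSet_Ioi] with x hx
    exact norm_cexp_mul_ofReal_sub_one_le (le_of_lt hx) (le_max_right _ _)
      (le_max_of_le_left (by linarith))
  · filter_upwards [ae_restrict_mem measurableSet_Ioi] with x (hx : 0 < x) w (hw : w.re < _)
    rw [norm_mul, Complex.norm_real, Real.norm_of_nonneg hx.le]
    exact mul_le_mul_of_nonneg_left (norm_cexp_mul_ofReal_le hx.le (le_max_of_le_left hw.le)) hx.le
  · refine .of_forall fun x w _ => ?_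
    simpa [mul_comm] using (((hasDerivAt_id w).mul_const (x : ℂ)).cexp.sub_const 1)

theorem hasDerivAt_thetaL (hε : 0 < ε)
    (hν : ∀ r < ε, IntegrableOn (fun x : ℝ => x * Real.exp (r * x)) (Ioi 0) ν) (hz : z.re < ε) :
    HasDerivAt (thetaL γ₀ ν) (γ₀ + ∫ x in Ioi (0 : ℝ), x * Complex.exp (z * x) ∂ν) z :=
  (((hasDerivAt_id z).const_mul (γ₀ : ℂ)).add
    (hasDerivAt_integral_cexp_mul_sub_one hε hν hz)).congr_deriv (by simp)

theorem differentiableOn_thetaL (hε : 0 < ε)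
    (hν : ∀ r < ε, IntegrableOn (fun x : ℝ => x * Real.exp (r * x)) (Ioi 0) ν) :
    DifferentiableOn ℂ (thetaL γ₀ ν) {z : ℂ | z.re < ε} :=
  fun _ hz => (hasDerivAt_thetaL hε hν hz).differentiableAt.differentiableWithinAt

noncomputable def thetaLLip (γ₀ : ℝ) (ν : Measure ℝ) (r : ℝ) : ℝ :=
  |γ₀| + ∫ x in Ioi (0 : ℝ), x * Real.exp (r * x) ∂ν

theorem thetaLLip_nonneg (γ₀ : ℝ) (ν : Measure ℝ) (r : ℝ) : 0 ≤ thetaLLip γ₀ ν r :=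
  add_nonneg (abs_nonneg _)
    (setIntegral_nonneg measurableSet_Ioi fun x (hx : 0 < x) => by positivity)

theorem norm_deriv_thetaL_le (hr0 : 0 ≤ r) (hr : r < ε)
    (hν : ∀ r < ε, IntegrableOn (fun x : ℝ => x * Real.exp (r * x)) (Ioi 0) ν) (hz : z.re ≤ r) :
    ‖deriv (thetaL γ₀ ν) z‖ ≤ thetaLLip γ₀ ν r := by
  rw [(hasDerivAt_thetaL (hr0.trans_lt hr) hν (hz.trans_lt hr)).deriv]
  refine (norm_add_le _ _).trans (add_le_add (by simp) ?_)
  refine norm_integral_le_of_norm_le (hν r hr) ?_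
  filter_upwards [ae_restrict_mem measurableSet_Ioi] with x (hx : 0 < x)
  rw [norm_mul, Complex.norm_real, Real.norm_of_nonneg hx.le]
  exact mul_le_mul_of_nonneg_left (norm_cexp_mul_ofReal_le hx.le hz) hx.le

theorem norm_thetaL_le (hr0 : 0 ≤ r) (hr : r < ε)
    (hν : ∀ r < ε, IntegrableOn (fun x : ℝ => x * Real.exp (r * x)) (Ioi 0) ν) (hz : z.re ≤ r) :
    ‖thetaL γ₀ ν z‖ ≤ thetaLLip γ₀ ν r * ‖z‖ := by
  have hS : IsOpen {w : ℂ | w.re < ε} := isOpen_lt Complex.continuous_re continuous_const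
  have := (convex_halfSpace_re_le r).norm_image_sub_le_of_norm_deriv_le (f := thetaL γ₀ ν)
    (fun w hw => (differentiableOn_thetaL (hr0.trans_lt hr) hν).differentiableAt
      (hS.mem_nhds (lt_of_le_of_lt hw hr)))
    (fun w hw => norm_deriv_thetaL_le hr0 hr hν hw)
    (show (0 : ℂ) ∈ {w : ℂ | w.re ≤ r} by simpa using hr0) hz
  simpa [thetaL] using this

end ThetaL

section Ufc

variable {t β ρ ε A s x : ℝ} {u : ℂ}

noncomputable def ufcCoeff (t A s : ℝ) : ℝ := (Real.exp (A * (t - s)) - 1) / A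

theorem ufc_eq_ufcCoeff (t β ρ : ℝ) (u : ℂ) (A s : ℝ) :
    ufc t β ρ u A s = ufcCoeff t A s * (u * β + u ^ 2 / 2) + ρ * u := rfl

theorem ufcCoeff_mem_Icc (hA : A < 0) (hs : s ≤ t) : ufcCoeff t A s ∈ Icc 0 (t - s) := by
  have hts : 0 ≤ t - s := sub_nonneg.2 hs
  refine ⟨div_nonneg_of_nonpos ?_ hA.le, (div_le_iff_of_neg hA).2 ?_⟩
  · linarith [Real.exp_le_one_iff.2 (mul_nonpos_of_nonpos_of_nonneg hA.le hts)]
  · linarith [Real.add_one_le_exp (A * (t - s))]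

theorem ufcCoeff_mem_Icc_of_mem_Icc (hA : A < 0) (hs : s ∈ Icc 0 t) : ufcCoeff t A s ∈ Icc 0 t :=
  let ⟨h0, h1⟩ := ufcCoeff_mem_Icc hA hs.2
  ⟨h0, h1.trans (by linarith [hs.1])⟩

theorem hasDerivAt_ufc (t β ρ : ℝ) (u : ℂ) (A s : ℝ) :
    HasDerivAt (fun u : ℂ => ufc t β ρ u A s) (ufcCoeff t A s * (β + u) + ρ) u := by
  have h := (((hasDerivAt_id u).mul_const (β : ℂ)).add
    ((hasDerivAt_pow 2 u).div_const 2)).const_mul (ufcCoeff t A s : ℂ) |>.add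
    ((hasDerivAt_id u).const_mul (ρ : ℂ))
  exact h.congr_deriv (by simp)

theorem continuousOn_ufc (t β ρ : ℝ) (u : ℂ) :
    ContinuousOn (fun p : ℝ × ℝ => ufc t β ρ u p.1 p.2) {p | p.1 ≠ 0} := by
  have hc : ContinuousOn (fun p : ℝ × ℝ => ufcCoeff t p.1 p.2) {p | p.1 ≠ 0} :=
    ContinuousOn.div (by fun_prop) (by fun_prop) fun _ hp => hp
  exact ((Complex.continuous_ofReal.comp_continuousOn hc).mul continuousOn_const).add
    continuousOn_const

noncomputable def ufcBound (t β ρ x : ℝ) : ℝ := t * (x * |β| + x ^ 2 / 2) + |ρ| * x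

theorem ufcBound_nonneg (ht : 0 ≤ t) (hx : 0 ≤ x) : 0 ≤ ufcBound t β ρ x := by
  unfold ufcBound; positivity

theorem ufcBound_mono (ht : 0 ≤ t) : MonotoneOn (ufcBound t β ρ) (Ici 0) := by
  intro x hx y _ hxy
  unfold ufcBound
  gcongr

theorem re_ufc_le (hA : A < 0) (hs : s ∈ Icc 0 t) :
    (ufc t β ρ u A s).re ≤ ufcBound t β ρ |u.re| := by
  obtain ⟨hc0, hct⟩ := ufcCoeff_mem_Icc_of_mem_Icc hA hs
  have hquad : u.re * β + (u.re ^ 2 - u.im ^ 2) / 2 ≤ |u.re| * |β| + |u.re| ^ 2 / 2 := by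
    rw [sq_abs, ← abs_mul]
    linarith [le_abs_self (u.re * β), sq_nonneg u.im]
  have hlin : ρ * u.re ≤ |ρ| * |u.re| := by rw [← abs_mul]; exact le_abs_self _
  have hre : (ufc t β ρ u A s).re =
      ufcCoeff t A s * (u.re * β + (u.re ^ 2 - u.im ^ 2) / 2) + ρ * u.re := by
    simp only [ufc_eq_ufcCoeff, Complex.add_re, Complex.div_ofNat_re, pow_two, Complex.mul_re,
      Complex.ofReal_re, Complex.ofReal_im]
    ring
  rw [hre, ufcBound]
  gcongr ?_ + ?_
  exact (mul_le_mul_of_nonneg_left hquad hc0).trans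
    (mul_le_mul_of_nonneg_right hct (by positivity))

theorem norm_ufc_le (hA : A < 0) (hs : s ∈ Icc 0 t) :
    ‖ufc t β ρ u A s‖ ≤ ufcBound t β ρ ‖u‖ := by
  obtain ⟨hc0, hct⟩ := ufcCoeff_mem_Icc_of_mem_Icc hA hs
  rw [ufc_eq_ufcCoeff, ufcBound]
  refine (norm_add_le _ _).trans (add_le_add ?_ (by simp))
  rw [norm_mul, Complex.norm_real, Real.norm_of_nonneg hc0]
  refine mul_le_mul hct ((norm_add_le _ _).trans ?_) (norm_nonneg _) (hc0.trans hct)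
  simp [norm_pow]

theorem norm_ufc_deriv_le (hA : A < 0) (hs : s ∈ Icc 0 t) :
    ‖(ufcCoeff t A s : ℂ) * (β + u) + ρ‖ ≤ t * (|β| + ‖u‖) + |ρ| := by
  obtain ⟨hc0, hct⟩ := ufcCoeff_mem_Icc_of_mem_Icc hA hs
  refine (norm_add_le _ _).trans (add_le_add ?_ (by simp))
  rw [norm_mul, Complex.norm_real, Real.norm_of_nonneg hc0]
  exact mul_le_mul hct ((norm_add_le _ _).trans (by simp)) (norm_nonneg _) (hc0.trans hct)

end Ufc

/-- The positive root of `ufcBound t β ρ x = ε`. -/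
noncomputable def stripWidth (t ε β ρ : ℝ) : ℝ :=
  -|β| - |ρ| / t + Real.sqrt ((|β| + |ρ| / t) ^ 2 + 2 * ε / t)

theorem ufcBound_lt {t ε β ρ x : ℝ} (ht : 0 < t) (hx : 0 ≤ x) (hxδ : x < stripWidth t ε β ρ) :
    ufcBound t β ρ x < ε := by
  set B := |β| + |ρ| / t
  have hsq : (x + B) ^ 2 < B ^ 2 + 2 * ε / t :=
    (Real.lt_sqrt (by positivity)).1 (by simp only [stripWidth] at hxδ; linarith)
  have hB : ufcBound t β ρ x = t / 2 * ((x + B) ^ 2 - B ^ 2) := by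
    simp only [ufcBound, B]; field_simp; ring
  rw [hB, ← lt_div_iff₀' (by positivity)]
  linarith [show 2 * ε / t = ε / (t / 2) by ring]

section Theta

variable {t ε β ρ γ₀ A s : ℝ} {ν π : Measure ℝ} {u : ℂ}

theorem ae_mem_prod_restrict (t : ℝ) (π : Measure ℝ) [SFinite π] :
    ∀ᵐ p ∂(π.restrict (Iio 0)).prod (volume.restrict (Ioc 0 t)), p.1 < 0 ∧ p.2 ∈ Icc 0 t := by
  rw [Measure.prod_restrict]
  filter_upwards [ae_restrict_mem (measurableSet_Iio.prod measurableSet_Ioc)] with p hp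
  exact ⟨hp.1, Ioc_subset_Icc_self hp.2⟩

theorem re_ufc_lt (ht : 0 < t) (hu : |u.re| < stripWidth t ε β ρ) (hA : A < 0)
    (hs : s ∈ Icc 0 t) : (ufc t β ρ u A s).re < ε :=
  (re_ufc_le hA hs).trans_lt (ufcBound_lt ht (abs_nonneg _) hu)

theorem aestronglyMeasurable_comp_ufc [SFinite π] {E : Type*} [NormedAddCommGroup E] {g : ℂ → E}
    (hg : ContinuousOn g {z | z.re < ε}) (ht : 0 < t) (hu : |u.re| < stripWidth t ε β ρ) :
    AEStronglyMeasurable (fun p : ℝ × ℝ => g (ufc t β ρ u p.1 p.2))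
      ((π.restrict (Iio 0)).prod (volume.restrict (Ioc 0 t))) := by
  rw [Measure.prod_restrict]
  refine ContinuousOn.aestronglyMeasurable ?_ (measurableSet_Iio.prod measurableSet_Ioc)
  exact hg.comp ((continuousOn_ufc t β ρ u).mono fun p hp => hp.1.ne)
    fun p hp => re_ufc_lt ht hu hp.1 (Ioc_subset_Icc_self hp.2)

theorem integrable_thetaL_ufc [IsFiniteMeasure π] (ht : 0 < t)
    (hν : ∀ r < ε, IntegrableOn (fun x : ℝ => x * Real.exp (r * x)) (Ioi 0) ν)
    (hu : |u.re| < stripWidth t ε β ρ) :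
    Integrable (fun p : ℝ × ℝ => thetaL γ₀ ν (ufc t β ρ u p.1 p.2))
      ((π.restrict (Iio 0)).prod (volume.restrict (Ioc 0 t))) := by
  set φ := ufcBound t β ρ |u.re|
  have hφ0 : 0 ≤ φ := ufcBound_nonneg ht.le (abs_nonneg _)
  have hφε : φ < ε := ufcBound_lt ht (abs_nonneg _) hu
  refine (integrable_const (thetaLLip γ₀ ν φ * ufcBound t β ρ ‖u‖)).mono'
    (aestronglyMeasurable_comp_ufc (differentiableOn_thetaL (hφ0.trans_lt hφε) hν).continuousOn
      ht hu) ?_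
  filter_upwards [ae_mem_prod_restrict t π] with p ⟨hA, hs⟩
  exact (norm_thetaL_le hφ0 hφε hν (re_ufc_le hA hs)).trans
    (mul_le_mul_of_nonneg_left (norm_ufc_le hA hs) (thetaLLip_nonneg _ _ _))

theorem hasDerivAt_integral_thetaL_ufc [IsFiniteMeasure π] (ht : 0 < t)
    (hν : ∀ r < ε, IntegrableOn (fun x : ℝ => x * Real.exp (r * x)) (Ioi 0) ν) {u₀ : ℂ}
    (hu₀ : |u₀.re| < stripWidth t ε β ρ) :
    HasDerivAt (fun u => ∫ p, thetaL γ₀ ν (ufc t β ρ u p.1 p.2)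
        ∂(π.restrict (Iio 0)).prod (volume.restrict (Ioc 0 t)))
      (∫ p, deriv (thetaL γ₀ ν) (ufc t β ρ u₀ p.1 p.2) * (ufcCoeff t p.1 p.2 * (β + u₀) + ρ)
        ∂(π.restrict (Iio 0)).prod (volume.restrict (Ioc 0 t))) u₀ := by
  obtain ⟨q, hu₀q, hqδ⟩ := exists_between hu₀
  have hq0 : 0 ≤ q := (abs_nonneg _).trans hu₀q.le
  set φ := ufcBound t β ρ q
  have hφ0 : 0 ≤ φ := ufcBound_nonneg ht.le hq0
  have hφε : φ < ε := ufcBound_lt ht hq0 hqδ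
  have hθ := differentiableOn_thetaL (γ₀ := γ₀) (hφ0.trans_lt hφε) hν
  have hH : IsOpen {z : ℂ | z.re < ε} := isOpen_lt Complex.continuous_re continuous_const
  set U := {u : ℂ | |u.re| < q} ∩ ball u₀ 1
  have hU : U ∈ 𝓝 u₀ := inter_mem ((isOpen_lt (by fun_prop) continuous_const).mem_nhds
    hu₀q) (ball_mem_nhds _ one_pos)
  have hre (u : ℂ) (hu : u ∈ U) {A s : ℝ} (hA : A < 0) (hs : s ∈ Icc 0 t) :
      (ufc t β ρ u A s).re ≤ φ :=
    (re_ufc_le hA hs).trans (ufcBound_mono ht.le (mem_Ici.2 (abs_nonneg _)) hq0 hu.1.le)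
  have hnorm (u : ℂ) (hu : u ∈ U) : ‖u‖ ≤ ‖u₀‖ + 1 := by
    linarith [mem_ball_iff_norm.1 hu.2, norm_le_insert' u u₀]
  refine (hasDerivAt_integral_of_dominated_loc_of_deriv_le
    (μ := (π.restrict (Iio 0)).prod (volume.restrict (Ioc 0 t)))
    (F := fun u p => thetaL γ₀ ν (ufc t β ρ u p.1 p.2))
    (F' := fun u p =>
      deriv (thetaL γ₀ ν) (ufc t β ρ u p.1 p.2) * (ufcCoeff t p.1 p.2 * (β + u) + ρ))
    (bound := fun _ => thetaLLip γ₀ ν φ * (t * (|β| + (‖u₀‖ + 1)) + |ρ|)) hU ?_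
    (integrable_thetaL_ufc ht hν hu₀) ?_ ?_ (integrable_const _) ?_).2
  · filter_upwards [hU] with u hu
    exact aestronglyMeasurable_comp_ufc hθ.continuousOn ht (hu.1.trans hqδ)
  · refine (aestronglyMeasurable_comp_ufc (hθ.deriv hH).continuousOn ht hu₀).mul ?_
    exact (by unfold ufcCoeff; fun_prop : Measurable fun p : ℝ × ℝ =>
      (ufcCoeff t p.1 p.2 : ℂ) * (β + u₀) + ρ).aestronglyMeasurable
  · filter_upwards [ae_mem_prod_restrict t π] with p ⟨hA, hs⟩ u hu
    rw [norm_mul]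
    refine mul_le_mul (norm_deriv_thetaL_le hφ0 hφε hν (hre u hu hA hs))
      ((norm_ufc_deriv_le hA hs).trans ?_) (norm_nonneg _) (thetaLLip_nonneg _ _ _)
    gcongr
    exact hnorm u hu
  · filter_upwards [ae_mem_prod_restrict t π] with p ⟨hA, hs⟩ u hu
    exact (hθ.differentiableAt (hH.mem_nhds ((hre u hu hA hs).trans_lt hφε))).hasDerivAt.comp u
      (hasDerivAt_ufc t β ρ u p.1 p.2)

theorem integrableOn_intervalIntegral_thetaL_ufc [IsFiniteMeasure π] (ht : 0 < t)
    (hν : ∀ r < ε, IntegrableOn (fun x : ℝ => x * Real.exp (r * x)) (Ioi 0) ν)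
    (hu : |u.re| < stripWidth t ε β ρ) :
    IntegrableOn (fun A : ℝ => ∫ s in (0 : ℝ)..t, thetaL γ₀ ν (ufc t β ρ u A s)) (Iio 0) π := by
  simp_rw [intervalIntegral.integral_of_le ht.le]
  exact (integrable_thetaL_ufc ht hν hu).integral_prod_left

theorem Theta_eq_integral [IsFiniteMeasure π] (ht : 0 < t)
    (hν : ∀ r < ε, IntegrableOn (fun x : ℝ => x * Real.exp (r * x)) (Ioi 0) ν)
    (hu : |u.re| < stripWidth t ε β ρ) :
    Theta t β ρ γ₀ ν π u = ∫ p, thetaL γ₀ ν (ufc t β ρ u p.1 p.2)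
      ∂(π.restrict (Iio 0)).prod (volume.restrict (Ioc 0 t)) := by
  simp_rw [Theta, intervalIntegral.integral_of_le ht.le]
  exact integral_integral (integrable_thetaL_ufc ht hν hu)

end Theta

theorem stmt_9_general (t ε β ρ γ₀ : ℝ) (ht : 0 < t)
    (ν : Measure ℝ)
    (hmin : Integrable (fun x : ℝ => min x 1) ν)
    (hexp : ∀ r : ℝ, r < ε → IntegrableOn (fun x : ℝ => Real.exp (r * x)) {x | 1 < x} ν)
    (π : Measure ℝ) [IsProbabilityMeasure π] :
    (∀ u : ℂ, |u.re| < -|β| - |ρ| / t + Real.sqrt ((|β| + |ρ| / t) ^ 2 + 2 * ε / t) →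
      IntegrableOn (fun A : ℝ => ∫ s in (0 : ℝ)..t, thetaL γ₀ ν (ufc t β ρ u A s))
        (Set.Iio 0) π) ∧
    DifferentiableOn ℂ (Theta t β ρ γ₀ ν π)
      {u : ℂ | |u.re| < -|β| - |ρ| / t + Real.sqrt ((|β| + |ρ| / t) ^ 2 + 2 * ε / t)} := by
  have hν (r : ℝ) (hr : r < ε) := integrableOn_Ioi_mul_exp hmin hexp hr
  have hS : IsOpen {u : ℂ | |u.re| < stripWidth t ε β ρ} :=
    isOpen_lt (by fun_prop) continuous_const
  refine ⟨fun u hu => integrableOn_intervalIntegral_thetaL_ufc ht hν hu, fun u hu => ?_⟩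
  refine ((hasDerivAt_integral_thetaL_ufc (π := π) (γ₀ := γ₀) ht hν hu).differentiableAt
    |>.congr_of_eventuallyEq ?_).differentiableWithinAt
  filter_upwards [hS.mem_nhds hu] with v hv using Theta_eq_integral ht hν hv

theorem stmt_9 (t ε β ρ γ₀ : ℝ) (ht : 0 < t) (hε : 0 < ε) (hγ₀ : 0 ≤ γ₀)
    (ν : Measure ℝ) (hν : ν (Set.Ioi (0 : ℝ))ᶜ = 0)
    (hmin : Integrable (fun x : ℝ => min x 1) ν)
    (hexp : ∀ r : ℝ, r < ε → IntegrableOn (fun x : ℝ => Real.exp (r * x)) {x | 1 < x} ν)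
    (π : Measure ℝ) [IsProbabilityMeasure π] (hπ : π (Set.Iio (0 : ℝ))ᶜ = 0) :
    (∀ u : ℂ, |u.re| < -|β| - |ρ| / t + Real.sqrt ((|β| + |ρ| / t) ^ 2 + 2 * ε / t) →
      IntegrableOn (fun A : ℝ => ∫ s in (0 : ℝ)..t, thetaL γ₀ ν (ufc t β ρ u A s))
        (Set.Iio 0) π) ∧
    DifferentiableOn ℂ (Theta t β ρ γ₀ ν π)
      {u : ℂ | |u.re| < -|β| - |ρ| / t + Real.sqrt ((|β| + |ρ| / t) ^ 2 + 2 * ε / t)} :=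
  stmt_9_general t ε β ρ γ₀ ht ν hmin hexp π
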